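/- Let k, ε, x₀, y₀, z₀ be real numbers with 0 < k < 2, and set ξ_k = √(4 − k²)/2. Define z(t) = z₀ + ε·t and x_R(t) = z(t) + k·ε + e^{(k/2)t}·[ (x₀ − z₀ − k·ε)·cos(ξ_k t) + ((k·(z₀ + k·ε + x₀) − 2·(y₀ + ε))/√(4 − k²))·sin(ξ_k t) ], y_R(t) = k·(z(t) + k·ε) − ε + e^{(k/2)t}·[ (−k·(z₀ + k·ε) + (y₀ + ε))·cos(ξ_k t) + ((k²·(z₀ + k·ε) − k·(y₀ + ε) + 2·(x₀ − z₀ − k·ε))/√(4 − k²))·sin(ξ_k t) ]. Then (x_R, y_R, z) satisfies x_R(0) = x₀, y_R(0) = y₀, z(0) = z₀, and for all t ∈ ℝ: x_R′(t) = k·x_R(t) − y_R(t), y_R′(t) = x_R(t) − z(t), z′(t) = ε. -/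

import Mathlib

/-!
Subtracting the particular solution `x = z + kε`, `y = k(z + kε) - ε`, which is affine in `t`,
leaves the homogeneous system `X' = kX - Y`, `Y' = X`. Its matrix has eigenvalues
`k/2 ± iξ` with `ξ = √(4 - k²)/2`, so its solutions are damped oscillations
`e^{kt/2}(A cos ξt + B sin ξt)`, and differentiating such an oscillation acts linearly on
its coefficients `(A, B)`. Matching the coefficients at `t = 0` gives the stated formulas.
-/

open Real

noncomputable def dampedOsc (c ξ A B t : ℝ) : ℝ :=
  exp (c * t) * (A * cos (ξ * t) + B * sin (ξ * t))

@[simp]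
theorem dampedOsc_zero (c ξ A B : ℝ) : dampedOsc c ξ A B 0 = A := by
  simp [dampedOsc]

theorem hasDerivAt_dampedOsc (c ξ A B t : ℝ) :
    HasDerivAt (dampedOsc c ξ A B) (dampedOsc c ξ (c * A + ξ * B) (c * B - ξ * A) t) t := by
  have hlin : ∀ a : ℝ, HasDerivAt (fun s : ℝ => a * s) a t := fun a => by
    simpa using (hasDerivAt_id t).const_mul a
  have h := (hlin c).exp.mul (((hlin ξ).cos.const_mul A).add ((hlin ξ).sin.const_mul B))
  exact h.congr_deriv (by simp only [dampedOsc, Pi.add_apply]; ring)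

section Focus

variable (k ξ X₀ Y₀ : ℝ)

/-- With `focusY`, the solution of `X' = kX - Y`, `Y' = X` through `(X₀, Y₀)` at `t = 0`. -/
noncomputable def focusX : ℝ → ℝ := dampedOsc (k / 2) ξ X₀ ((k * X₀ - 2 * Y₀) / (2 * ξ))

noncomputable def focusY : ℝ → ℝ := dampedOsc (k / 2) ξ Y₀ ((2 * X₀ - k * Y₀) / (2 * ξ))

@[simp]
theorem focusX_zero : focusX k ξ X₀ Y₀ 0 = X₀ := dampedOsc_zero ..

@[simp]
theorem focusY_zero : focusY k ξ X₀ Y₀ 0 = Y₀ := dampedOsc_zero ..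

variable {k ξ}

theorem hasDerivAt_focusX (hξ0 : ξ ≠ 0) (hξ : 4 * ξ ^ 2 = 4 - k ^ 2) (t : ℝ) :
    HasDerivAt (focusX k ξ X₀ Y₀) (k * focusX k ξ X₀ Y₀ t - focusY k ξ X₀ Y₀ t) t := by
  have hA : k / 2 * X₀ + ξ * ((k * X₀ - 2 * Y₀) / (2 * ξ)) = k * X₀ - Y₀ := by
    field_simp; ring
  have hB : k / 2 * ((k * X₀ - 2 * Y₀) / (2 * ξ)) - ξ * X₀ =
      k * ((k * X₀ - 2 * Y₀) / (2 * ξ)) - (2 * X₀ - k * Y₀) / (2 * ξ) := by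
    field_simp; linear_combination (-X₀) * hξ
  have h := hasDerivAt_dampedOsc (k / 2) ξ X₀ ((k * X₀ - 2 * Y₀) / (2 * ξ)) t
  rw [hA, hB] at h
  exact h.congr_deriv (by simp only [focusX, focusY, dampedOsc]; ring)

theorem hasDerivAt_focusY (hξ0 : ξ ≠ 0) (hξ : 4 * ξ ^ 2 = 4 - k ^ 2) (t : ℝ) :
    HasDerivAt (focusY k ξ X₀ Y₀) (focusX k ξ X₀ Y₀ t) t := by
  have hA : k / 2 * Y₀ + ξ * ((2 * X₀ - k * Y₀) / (2 * ξ)) = X₀ := by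
    field_simp; ring
  have hB : k / 2 * ((2 * X₀ - k * Y₀) / (2 * ξ)) - ξ * Y₀ = (k * X₀ - 2 * Y₀) / (2 * ξ) := by
    field_simp; linear_combination (-Y₀) * hξ
  have h := hasDerivAt_dampedOsc (k / 2) ξ Y₀ ((2 * X₀ - k * Y₀) / (2 * ξ)) t
  rwa [hA, hB] at h

end Focus

/-- the explicit expressions `(x_R, y_R, z)` solve the right-region
linear system `x' = k·x - y`, `y' = x - z`, `z' = ε` with initial condition
`(x₀, y₀, z₀)`. -/
theorem stmt3 (k ε x₀ y₀ z₀ : ℝ) (hk0 : 0 < k) (hk2 : k < 2)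
    (ξ : ℝ) (hξ : ξ = Real.sqrt (4 - k ^ 2) / 2)
    (z xR yR : ℝ → ℝ)
    (hz : ∀ t, z t = z₀ + ε * t)
    (hx : ∀ t, xR t = z t + k * ε +
      Real.exp ((k / 2) * t) *
        ((x₀ - z₀ - k * ε) * Real.cos (ξ * t) +
          ((k * (z₀ + k * ε + x₀) - 2 * (y₀ + ε)) / Real.sqrt (4 - k ^ 2)) *
            Real.sin (ξ * t)))
    (hy : ∀ t, yR t = k * (z t + k * ε) - ε +
      Real.exp ((k / 2) * t) *
        ((-k * (z₀ + k * ε) + (y₀ + ε)) * Real.cos (ξ * t) +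
          ((k ^ 2 * (z₀ + k * ε) - k * (y₀ + ε) + 2 * (x₀ - z₀ - k * ε)) /
              Real.sqrt (4 - k ^ 2)) *
            Real.sin (ξ * t))) :
    xR 0 = x₀ ∧ yR 0 = y₀ ∧ z 0 = z₀ ∧
    ∀ t : ℝ,
      HasDerivAt xR (k * xR t - yR t) t ∧
      HasDerivAt yR (xR t - z t) t ∧
      HasDerivAt z ε t := by
  have hu : 0 < 4 - k ^ 2 := by nlinarith
  have hξ2 : 2 * ξ = √(4 - k ^ 2) := by rw [hξ]; ring
  have hξ0 : ξ ≠ 0 := by rw [hξ]; positivity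
  have hξsq : 4 * ξ ^ 2 = 4 - k ^ 2 := by
    rw [show 4 * ξ ^ 2 = (2 * ξ) ^ 2 by ring, hξ2, sq_sqrt hu.le]
  set X₀ := x₀ - z₀ - k * ε
  set Y₀ := -k * (z₀ + k * ε) + (y₀ + ε)
  have hzR : z = fun t => z₀ + ε * t := funext hz
  have hxR : xR = fun t => z t + k * ε + focusX k ξ X₀ Y₀ t := funext fun t => by
    rw [hx, focusX, dampedOsc, hξ2]; ring
  have hyR : yR = fun t => k * (z t + k * ε) - ε + focusY k ξ X₀ Y₀ t := funext fun t => by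
    rw [hy, focusY, dampedOsc, hξ2]; ring
  subst hxR hyR hzR
  refine ⟨by simp [X₀], by simp [Y₀]; ring, by simp, fun t => ?_⟩
  have hz' : HasDerivAt (fun t => z₀ + ε * t) ε t := by
    simpa using ((hasDerivAt_id t).const_mul ε).const_add z₀
  refine ⟨?_, ?_, hz'⟩
  · exact ((hz'.add_const _).add (hasDerivAt_focusX X₀ Y₀ hξ0 hξsq t)).congr_deriv (by ring)
  · exact (((hz'.add_const _).const_mul k).sub_const ε |>.add
      (hasDerivAt_focusY X₀ Y₀ hξ0 hξsq t)).congr_deriv (by ring)
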